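/- arXiv:1606.08153 — 8 statements merged into one kernel-verified Lean document; each statement's English description precedes it below -/
import Mathlib

section
/- For all positive integers n, the product 2(2n+1)·C(2n,n) divides C(6n,3n)·C(3n,n). -/
/-!
Clearing denominators, the claim becomes `(2n+2)! (3n)! (2n)! ∣ (6n)! (n+1)!`, checked prime by
prime. For an odd prime `p`, Legendre's formula reduces it to the floor inequality
`⌊(2n+2)/m⌋ + ⌊3n/m⌋ + ⌊2n/m⌋ ≤ ⌊6n/m⌋ + ⌊(n+1)/m⌋` for every power `m = p^i ≥ 3`; it depends
only on `n mod m`. The inequality fails for `m = 2` and even `n`, so for `p = 2` we use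
`v₂((2m)!) = v₂(m!) + m` instead, which reduces the claim to `v₂(n!) < n`.
-/

open Nat Finset

theorem sum_padicValNat_factorial_le_of_forall_div_le {p : ℕ} [Fact p.Prime]
    {ι κ : Type*} [Fintype ι] [Fintype κ] (a : ι → ℕ) (b : κ → ℕ)
    (h : ∀ i, 1 ≤ i → ∑ j, a j / p ^ i ≤ ∑ k, b k / p ^ i) :
    ∑ j, padicValNat p (a j)! ≤ ∑ k, padicValNat p (b k)! := by
  set N := ∑ j, a j + ∑ k, b k + 1
  have hlog {x : ℕ} (hx : x < N) : log p x < N := (log_le_self p x).trans_lt hx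
  have ha (j : ι) : a j < N := by
    have := single_le_sum (fun j _ => zero_le (a j)) (mem_univ j)
    omega
  have hb (k : κ) : b k < N := by
    have := single_le_sum (fun k _ => zero_le (b k)) (mem_univ k)
    omega
  simp only [padicValNat_factorial (hlog (ha _)), padicValNat_factorial (hlog (hb _))]
  rw [sum_comm, sum_comm (s := univ)]
  exact sum_le_sum fun i hi => h i (mem_Ico.1 hi).1

theorem add_add_choose_mul_add_choose_mul_factorials (a b c : ℕ) :
    (a + b + c).choose a * (b + c).choose b * (a ! * b ! * c !) = (a + b + c)! := by
  have hbca := add_choose_mul_factorial_mul_factorial (b + c) a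
  have hcb := add_choose_mul_factorial_mul_factorial c b
  rw [add_comm (b + c), ← add_assoc] at hbca
  rw [add_comm c] at hcb
  rw [← hbca, ← hcb]
  ring

theorem two_mul_two_mul_add_one_mul_choose_mul_factorial (n : ℕ) :
    2 * (2 * n + 1) * (2 * n).choose n * ((n + 1)! * n !) = (2 * n + 2)! := by
  have h := add_choose_mul_factorial_mul_factorial n n
  rw [← two_mul] at h
  rw [show 2 * n + 2 = 2 * n + 1 + 1 from rfl, factorial_succ, factorial_succ, factorial_succ, ← h]
  ring

namespace Sun

lemma div_le_of_lt {m r : ℕ} (hm : 3 ≤ m) (hr : r < m) :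
    (2 * r + 2) / m + 3 * r / m + 2 * r / m ≤ 6 * r / m + (r + 1) / m := by
  -- All quotients are small, so it suffices to locate each numerator among `m, 2m, 3m, 4m`.
  have h (a j : ℕ) : j ≤ a / m ↔ j * m ≤ a := le_div_iff_mul_le (by omega)
  have := h (2 * r + 2) 1
  have := h (2 * r + 2) 2
  have := h (2 * r + 2) 3
  have := h (3 * r) 1
  have := h (3 * r) 2
  have := h (3 * r) 3
  have := h (2 * r) 1
  have := h (2 * r) 2
  have := h (6 * r) 1
  have := h (6 * r) 2
  have := h (6 * r) 3
  have := h (6 * r) 4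
  have := h (r + 1) 1
  -- `omega` only sees the quotients as natural numbers once they are variables.
  generalize (2 * r + 2) / m = A at *
  generalize (3 * r) / m = B at *
  generalize (2 * r) / m = C at *
  generalize (6 * r) / m = D at *
  generalize (r + 1) / m = E at *
  omega

lemma div_le (n : ℕ) {m : ℕ} (hm : 3 ≤ m) :
    (2 * n + 2) / m + 3 * n / m + 2 * n / m ≤ 6 * n / m + (n + 1) / m := by
  obtain ⟨q, r, hr, rfl⟩ : ∃ q r, r < m ∧ n = r + m * q :=
    ⟨n / m, n % m, mod_lt n (by omega), by rw [add_comm, div_add_mod]⟩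
  rw [show 2 * (r + m * q) + 2 = 2 * r + 2 + m * (2 * q) by ring,
    show 3 * (r + m * q) = 3 * r + m * (3 * q) by ring,
    show 2 * (r + m * q) = 2 * r + m * (2 * q) by ring,
    show 6 * (r + m * q) = 6 * r + m * (6 * q) by ring,
    show r + m * q + 1 = r + 1 + m * q by ring]
  simp only [Nat.add_mul_div_left _ _ (show 0 < m by omega)]
  have := div_le_of_lt hm hr
  omega

lemma padicValNat_two_le {n : ℕ} (hn : n ≠ 0) :
    padicValNat 2 (2 * n + 2)! + padicValNat 2 (3 * n)! + padicValNat 2 (2 * n)! ≤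
      padicValNat 2 (6 * n)! + padicValNat 2 (n + 1)! := by
  rw [show 2 * n + 2 = 2 * (n + 1) by ring, show 6 * n = 2 * (3 * n) by ring,
    padicValNat_factorial_mul, padicValNat_factorial_mul, padicValNat_factorial_mul]
  have := padicValNat_factorial_lt_of_ne_zero 2 hn
  omega

lemma factorial_dvd {n : ℕ} (hn : n ≠ 0) :
    (2 * n + 2)! * (3 * n)! * (2 * n)! ∣ (6 * n)! * (n + 1)! := by
  rw [← factorization_prime_le_iff_dvd (by positivity) (by positivity)]
  intro p hp
  have := Fact.mk hp
  simp only [factorization_def _ hp, padicValNat.mul, ne_eq, mul_eq_zero, factorial_ne_zero,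
    or_self, not_false_eq_true]
  rcases hp.eq_two_or_odd' with rfl | ⟨k, rfl⟩
  · exact padicValNat_two_le hn
  · have hp3 : 3 ≤ 2 * k + 1 := by have := hp.two_le; omega
    have := sum_padicValNat_factorial_le_of_forall_div_le ![2 * n + 2, 3 * n, 2 * n]
      ![6 * n, n + 1] fun i hi => by
        simpa [Fin.sum_univ_three, add_assoc] using
          div_le n (hp3.trans (Nat.le_self_pow (by omega) _))
    simpa [Fin.sum_univ_three, add_assoc] using this

end Sun

theorem sun_divisibility (n : ℕ) (hn : 0 < n) :
    2 * (2 * n + 1) * Nat.choose (2 * n) n ∣ Nat.choose (6 * n) (3 * n) * Nat.choose (3 * n) n := by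
  have hR := add_add_choose_mul_add_choose_mul_factorials (3 * n) n (2 * n)
  rw [show 3 * n + n + 2 * n = 6 * n by ring, show n + 2 * n = 3 * n by ring] at hR
  have key := Sun.factorial_dvd hn.ne'
  rw [← two_mul_two_mul_add_one_mul_choose_mul_factorial, ← hR] at key
  refine (Nat.mul_dvd_mul_iff_right
    (by positivity : 0 < (n + 1)! * n ! * ((3 * n)! * (2 * n)!))).mp ?_
  convert key using 1 <;> ring
end

section
/- For all positive integers n, (2n+3) divides 3·S_n, where S_n = C(6n,3n)·C(3n,n)/(2(2n+1)·C(2n,n)). -/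
def S (n : ℕ) : ℕ :=
  Nat.choose (6 * n) (3 * n) * Nat.choose (3 * n) n / (2 * (2 * n + 1) * Nat.choose (2 * n) n)

/-!
By Legendre's formula, `S n` is an integer for `n ≥ 1`: for every prime `p` the terms
`⌊6n/pⁱ⌋ + ⌊n/pⁱ⌋ - ⌊3n/pⁱ⌋ - 2⌊2n/pⁱ⌋` are nonnegative, and they are positive when
the fractional part of `n/pⁱ` lies in `[1/6, 1/2)`. This happens for every `pⁱ ∣ 2n+1`, and for
`2^(k+2)` when `2^k ≤ n < 2^(k+1)`, which pays for the factor `2(2n+1)` of the denominator.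
The quotient of consecutive terms gives `(2n+3)(n+1) S(n+1) = 6(6n+1)(6n+5) S n`, and since
`2n+3` is coprime to `2(6n+1)(6n+5)`, integrality of `S (n+1)` forces `2n+3 ∣ 3 S n`.
-/

open Nat Finset

lemma mul_div_eq_mul_div_add_mul_mod_div (k n : ℕ) {q : ℕ} (hq : 0 < q) :
    k * n / q = k * (n / q) + k * (n % q) / q := by
  conv_lhs => rw [← Nat.div_add_mod n q, mul_add, mul_left_comm, Nat.mul_add_div hq]

lemma div_add_two_mul_div_le (n q : ℕ) : 3 * n / q + 2 * (2 * n / q) ≤ 6 * n / q + n / q := by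
  rcases q.eq_zero_or_pos with rfl | hq
  · simp
  have hr := Nat.mod_lt n hq
  rw [mul_div_eq_mul_div_add_mul_mod_div 3 n hq, mul_div_eq_mul_div_add_mul_mod_div 2 n hq,
    mul_div_eq_mul_div_add_mul_mod_div 6 n hq]
  have h3 : 3 * (n % q) / q < 3 := (Nat.div_lt_iff_lt_mul hq).mpr (by omega)
  have h2 : 2 * (n % q) / q < 2 := (Nat.div_lt_iff_lt_mul hq).mpr (by omega)
  have h63 : 2 * (3 * (n % q) / q) ≤ 6 * (n % q) / q :=
    (Nat.mul_div_le_mul_div_assoc 2 _ q).trans_eq (by ring_nf)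
  have h62 : 3 * (2 * (n % q) / q) ≤ 6 * (n % q) / q :=
    (Nat.mul_div_le_mul_div_assoc 3 _ q).trans_eq (by ring_nf)
  omega

/-- The hypotheses say that the fractional part of `n / q` lies in `[1/6, 1/2)`. -/
lemma div_add_two_mul_div_lt {n q : ℕ} (h6 : q ≤ 6 * (n % q)) (h2 : 2 * (n % q) < q) :
    3 * n / q + 2 * (2 * n / q) < 6 * n / q + n / q := by
  have hq : 0 < q := by omega
  rw [mul_div_eq_mul_div_add_mul_mod_div 3 n hq, mul_div_eq_mul_div_add_mul_mod_div 2 n hq,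
    mul_div_eq_mul_div_add_mul_mod_div 6 n hq, Nat.div_eq_of_lt h2]
  have h6' : 1 ≤ 6 * (n % q) / q := (Nat.le_div_iff_mul_le hq).mpr (by omega)
  have h63 : 2 * (3 * (n % q) / q) ≤ 6 * (n % q) / q :=
    (Nat.mul_div_le_mul_div_assoc 2 _ q).trans_eq (by ring_nf)
  omega

lemma sum_add_card_le_sum {ι : Type*} {s t : Finset ι} {f g : ι → ℕ} (hts : t ⊆ s)
    (hle : ∀ i ∈ s, g i ≤ f i) (hlt : ∀ i ∈ t, g i < f i) :
    ∑ i ∈ s, g i + #t ≤ ∑ i ∈ s, f i := by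
  classical
  calc ∑ i ∈ s, g i + #t = ∑ i ∈ s, (g i + if i ∈ t then 1 else 0) := by
        rw [sum_add_distrib, sum_boole, filter_mem_eq_inter, inter_eq_right.mpr hts, cast_id]
    _ ≤ ∑ i ∈ s, f i := sum_le_sum fun i hi => by
        split_ifs with h
        exacts [hlt i h, by simpa using hle i hi]

lemma two_mul_mod_add_one_eq {n q : ℕ} (h : q ∣ 2 * n + 1) : 2 * (n % q) + 1 = q := by
  have hq : 0 < q := Nat.pos_of_dvd_of_pos h (by omega)
  have hdvd : q ∣ 2 * (n % q) + 1 := by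
    have hn : 2 * n + 1 = q * (2 * (n / q)) + (2 * (n % q) + 1) := by
      linarith [Nat.div_add_mod n q]
    rwa [hn, Nat.dvd_add_right (dvd_mul_right q _)] at h
  obtain ⟨k, hk⟩ := hdvd
  have hr := Nat.mod_lt n hq
  rcases k with _ | _ | k
  · omega
  · omega
  · nlinarith

lemma exists_finset_factorization_le_card {n p : ℕ} (hn : 0 < n) (hp : p.Prime) :
    ∃ t ⊆ Ico 1 (6 * n + 1), (2 * (2 * n + 1)).factorization p ≤ #t ∧
      ∀ i ∈ t, p ^ i ≤ 6 * (n % p ^ i) ∧ 2 * (n % p ^ i) < p ^ i := by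
  rw [Nat.factorization_mul two_ne_zero (by omega), Finsupp.add_apply]
  by_cases hp2 : p = 2
  · subst hp2
    set k := Nat.log 2 n
    have hkn : 2 ^ k ≤ n := Nat.pow_log_le_self 2 hn.ne'
    have hnk : n < 2 ^ (k + 1) := Nat.lt_pow_succ_log_self one_lt_two n
    have hk : k < n := Nat.lt_two_pow_self.trans_le hkn
    have hmod : n % 2 ^ (k + 2) = n := Nat.mod_eq_of_lt (by rw [pow_succ]; omega)
    refine ⟨{k + 2}, by simp; omega, ?_, fun i hi => ?_⟩
    · rw [Nat.Prime.factorization_self prime_two,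
        Nat.factorization_eq_zero_of_not_dvd (by omega : ¬ 2 ∣ 2 * n + 1)]
      simp
    · rw [mem_singleton.mp hi, hmod, pow_succ, pow_succ]
      omega
  · set v := (2 * n + 1).factorization p
    have hv : v < 2 * n + 1 := Nat.factorization_lt p (by omega)
    refine ⟨Icc 1 v, fun i hi => by simp at hi ⊢; omega, ?_, fun i hi => ?_⟩
    · rw [Nat.factorization_eq_zero_of_not_dvd
        fun h => hp2 ((prime_dvd_prime_iff_eq hp prime_two).mp h)]
      simp
    · rw [mem_Icc] at hi
      have hpi : 1 < p ^ i := Nat.one_lt_pow (by omega) hp.one_lt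
      have := two_mul_mod_add_one_eq ((hp.pow_dvd_iff_le_factorization (by omega)).mpr hi.2)
      omega

lemma factorization_two_mul_two_mul_add_one_add_le {n p : ℕ} (hn : 0 < n) (hp : p.Prime) :
    (2 * (2 * n + 1)).factorization p + (3 * n)!.factorization p + 2 * (2 * n)!.factorization p
      ≤ (6 * n)!.factorization p + (n !).factorization p := by
  obtain ⟨t, hts, hcard, hgain⟩ := exists_finset_factorization_le_card hn hp
  have hlog : ∀ m ≤ 6 * n, Nat.log p m < 6 * n + 1 := fun m hm =>
    (Nat.log_le_self p m).trans_lt (by omega)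
  rw [factorization_factorial hp (hlog (3 * n) (by omega)),
    factorization_factorial hp (hlog (2 * n) (by omega)),
    factorization_factorial hp (hlog (6 * n) le_rfl),
    factorization_factorial hp (hlog n (by omega)),
    mul_sum, ← sum_add_distrib, add_assoc, ← sum_add_distrib]
  have := sum_add_card_le_sum hts (fun i _ => div_add_two_mul_div_le n (p ^ i))
    fun i hi => div_add_two_mul_div_lt (hgain i hi).1 (hgain i hi).2
  omega

theorem two_mul_two_mul_add_one_mul_dvd {n : ℕ} (hn : 0 < n) :
    2 * (2 * n + 1) * ((3 * n)! * (2 * n)! * (2 * n)!) ∣ (6 * n)! * n ! := by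
  refine (factorization_prime_le_iff_dvd (by positivity) (by positivity)).mp fun p hp => ?_
  have hB : (3 * n)! * (2 * n)! * (2 * n)! ≠ 0 := by positivity
  simp only [Nat.factorization_mul (by omega : 2 * (2 * n + 1) ≠ 0) hB,
    Nat.factorization_mul (mul_ne_zero (factorial_ne_zero _) (factorial_ne_zero _))
      (factorial_ne_zero _),
    Nat.factorization_mul (factorial_ne_zero _) (factorial_ne_zero _), Finsupp.add_apply]
  have := factorization_two_mul_two_mul_add_one_add_le hn hp
  omega

theorem S_eq_factorial_div (n : ℕ) :
    S n = (6 * n)! * n ! / (2 * (2 * n + 1) * ((3 * n)! * (2 * n)! * (2 * n)!)) := by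
  have h6 : (6 * n).choose (3 * n) * (3 * n)! * (3 * n)! = (6 * n)! := by
    rw [show 6 * n = 3 * n + 3 * n by ring, add_choose_mul_factorial_mul_factorial]
  have h3 : (3 * n).choose n * (2 * n)! * n ! = (3 * n)! := by
    rw [show 3 * n = 2 * n + n by ring, add_choose_mul_factorial_mul_factorial]
  have h2 : (2 * n).choose n * n ! * n ! = (2 * n)! := by
    rw [two_mul, add_choose_mul_factorial_mul_factorial]
  have hc : 0 < (3 * n)! * n ! * (2 * n)! * n ! := by positivity
  rw [S, ← Nat.mul_div_mul_right _ _ hc]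
  congr 1
  · calc _ = (6 * n).choose (3 * n) * (3 * n)! * ((3 * n).choose n * (2 * n)! * n !) * n ! := by
          ring
      _ = _ := by rw [h3, h6]
  · calc _ = 2 * (2 * n + 1) * ((3 * n)! * (2 * n)! * ((2 * n).choose n * n ! * n !)) := by ring
      _ = _ := by rw [h2]

theorem S_mul_eq {n : ℕ} (hn : 0 < n) :
    S n * (2 * (2 * n + 1) * ((3 * n)! * (2 * n)! * (2 * n)!)) = (6 * n)! * n ! := by
  rw [S_eq_factorial_div, Nat.div_mul_cancel (two_mul_two_mul_add_one_mul_dvd hn)]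

/-- With `T n = (6n)! n! / ((3n)! (2n)! (2n)!)`, this is
`T (n+1) / T n = 6(6n+1)(6n+5) / ((2n+1)(n+1))`, cross-multiplied. -/
lemma factorial_quotient_succ (n : ℕ) :
    (6 * (n + 1))! * (n + 1)! * ((2 * n + 1) * (n + 1) * ((3 * n)! * (2 * n)! * (2 * n)!)) =
      6 * (6 * n + 1) * (6 * n + 5) * ((6 * n)! * n !) *
        ((3 * (n + 1))! * (2 * (n + 1))! * (2 * (n + 1))!) := by
  simp only [mul_add, mul_one, factorial_succ]
  ring

theorem mul_S_succ {n : ℕ} (hn : 0 < n) :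
    (2 * n + 3) * (n + 1) * S (n + 1) = 6 * (6 * n + 1) * (6 * n + 5) * S n := by
  set B : ℕ → ℕ := fun m => (3 * m)! * (2 * m)! * (2 * m)!
  have hB : 0 < 2 * (2 * n + 1) * B n * B (n + 1) := by positivity
  refine Nat.eq_of_mul_eq_mul_right hB ?_
  calc (2 * n + 3) * (n + 1) * S (n + 1) * (2 * (2 * n + 1) * B n * B (n + 1))
      = S (n + 1) * (2 * (2 * (n + 1) + 1) * B (n + 1)) * ((2 * n + 1) * (n + 1) * B n) := by ring
    _ = 6 * (6 * n + 1) * (6 * n + 5) * ((6 * n)! * n !) * B (n + 1) := by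
      rw [S_mul_eq n.succ_pos, factorial_quotient_succ]
    _ = 6 * (6 * n + 1) * (6 * n + 5) * S n * (2 * (2 * n + 1) * B n * B (n + 1)) := by
      rw [← S_mul_eq hn]; ring

lemma coprime_two_mul_add_three (n : ℕ) :
    Coprime (2 * n + 3) (2 * (6 * n + 1) * (6 * n + 5)) := by
  have h2 : Coprime (2 * n + 3) 2 := coprime_two_right.mpr ⟨n + 1, by ring⟩
  have h1 : Coprime (6 * n + 1) (3 * (2 * n + 3)) := by
    rw [show 3 * (2 * n + 3) = 2 ^ 3 + (6 * n + 1) by ring, coprime_add_self_right]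
    exact (coprime_two_right.mpr ⟨3 * n, by ring⟩).pow_right 3
  have h5 : Coprime (6 * n + 5) (3 * (2 * n + 3)) := by
    rw [show 3 * (2 * n + 3) = 2 ^ 2 + (6 * n + 5) by ring, coprime_add_self_right]
    exact (coprime_two_right.mpr ⟨3 * n + 2, by ring⟩).pow_right 2
  exact (h2.mul_right h1.coprime_mul_left_right.symm).mul_right h5.coprime_mul_left_right.symm

theorem guo_divisibility (n : ℕ) (hn : 0 < n) : (2 * n + 3) ∣ 3 * S n := by
  have h : 2 * n + 3 ∣ 2 * (6 * n + 1) * (6 * n + 5) * (3 * S n) :=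
    ⟨(n + 1) * S (n + 1), by linarith [mul_S_succ hn]⟩
  exact (coprime_two_mul_add_three n).dvd_of_dvd_mul_left h
end

section
/- For all positive integers n, S_n = 12^n · (∏_{i=0}^{n-1} (6i+1)(6i+5)) / (2·(2n+1)!), where S_n = C(6n,3n)·C(3n,n)/(2(2n+1)·C(2n,n)). -/
open Nat Finset

lemma div_add_div_add_div_le_of_lt {q r : ℕ} (hq : 2 ≤ q) (hr : r < q) :
    (2 * r + 1) / q + 2 * r / q + 3 * r / q ≤ 6 * r / q := by
  have hq0 : 0 < q := by omega
  have h1 : (2 * r + 1) / q < 2 := by rw [Nat.div_lt_iff_lt_mul hq0]; omega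
  have h2 : 2 * r / q < 2 := by rw [Nat.div_lt_iff_lt_mul hq0]; omega
  have h3 : 3 * r / q < 3 := by rw [Nat.div_lt_iff_lt_mul hq0]; omega
  have l1 := Nat.lt_mul_div_succ (2 * r + 1) hq0
  have l2 := Nat.lt_mul_div_succ (2 * r) hq0
  have l3 := Nat.lt_mul_div_succ (3 * r) hq0
  have u1 := Nat.div_mul_le_self (2 * r + 1) q
  have u2 := Nat.div_mul_le_self (2 * r) q
  have u3 := Nat.div_mul_le_self (3 * r) q
  rw [Nat.le_div_iff_mul_le hq0]
  interval_cases (2 * r + 1) / q <;> interval_cases 2 * r / q <;> interval_cases 3 * r / q <;> omega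

lemma div_add_div_add_div_le {q : ℕ} (hq : 2 ≤ q) (n : ℕ) :
    (2 * n + 1) / q + 2 * n / q + 3 * n / q ≤ 6 * n / q + n / q := by
  obtain ⟨a, r, hr, rfl⟩ : ∃ a r, r < q ∧ n = r + a * q :=
    ⟨n / q, n % q, Nat.mod_lt _ (by omega), (Nat.mod_add_div' n q).symm⟩
  have hq0 : 0 < q := by omega
  have := div_add_div_add_div_le_of_lt hq hr
  have e : ∀ c d : ℕ, (c + d * a * q) / q = c / q + d * a := fun c d =>
    Nat.add_mul_div_right _ _ hq0
  rw [show 2 * (r + a * q) + 1 = 2 * r + 1 + 2 * a * q by ring,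
    show 2 * (r + a * q) = 2 * r + 2 * a * q by ring,
    show 3 * (r + a * q) = 3 * r + 3 * a * q by ring,
    show 6 * (r + a * q) = 6 * r + 6 * a * q by ring, e, e, e, e, Nat.add_mul_div_right r a hq0,
    Nat.div_eq_of_lt hr]
  omega

lemma padicValNat_factorial_of_le {p m N : ℕ} [Fact p.Prime] (hm : m ≤ N) :
    padicValNat p m ! = ∑ i ∈ Ico 1 (N + 1), m / p ^ i :=
  padicValNat_factorial ((Nat.log_le_self p m).trans_lt (Nat.lt_succ_of_le hm))

lemma two_mul_factorial_mul_factorial_mul_factorial_dvd {n : ℕ} (hn : 0 < n) :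
    2 * ((2 * n + 1)! * (2 * n)! * (3 * n)!) ∣ (6 * n)! * n ! := by
  refine (Nat.factorization_prime_le_iff_dvd (by positivity) (by positivity)).mp fun p hp => ?_
  have := Fact.mk hp
  simp only [Nat.factorization_def _ hp]
  rw [padicValNat.mul two_ne_zero (by positivity), padicValNat.mul (by positivity) (by positivity),
    padicValNat.mul (by positivity) (by positivity),
    padicValNat.mul (by positivity) (by positivity)]
  simp (disch := omega) only [padicValNat_factorial_of_le (N := 6 * n), ← sum_add_distrib]
  have hle : ∀ i ∈ Ico 1 (6 * n + 1),
      (2 * n + 1) / p ^ i + 2 * n / p ^ i + 3 * n / p ^ i ≤ 6 * n / p ^ i + n / p ^ i :=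
    fun i hi => div_add_div_add_div_le
      (hp.two_le.trans (Nat.le_self_pow (by simp only [mem_Ico] at hi; omega) p)) n
  rcases eq_or_ne p 2 with rfl | hp2
  · -- the power of 2 in `(3n, 6n]` makes one summand strict
    set k := Nat.log 2 (3 * n) + 1
    have hk3 : 3 * n < 2 ^ k := Nat.lt_pow_succ_log_self one_lt_two _
    have hk6 : 2 ^ k ≤ 6 * n := by
      have := Nat.pow_log_le_self 2 (show 3 * n ≠ 0 by omega)
      rw [pow_succ]; omega
    have hk : k ∈ Ico 1 (6 * n + 1) := by
      have := Nat.lt_pow_self (n := k) one_lt_two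
      simp only [mem_Ico]; omega
    rw [padicValNat_self, add_comm, Nat.add_one_le_iff]
    refine sum_lt_sum hle ⟨k, hk, ?_⟩
    rw [Nat.div_eq_of_lt (by omega), Nat.div_eq_of_lt (by omega), Nat.div_eq_of_lt hk3]
    exact Nat.div_pos hk6 (by positivity) |>.trans_le (Nat.le_add_right _ _)
  · rw [padicValNat_primes hp2, zero_add]
    exact sum_le_sum hle

lemma factorial_six_mul_mul_factorial (n : ℕ) :
    (6 * n)! * n ! =
      12 ^ n * (∏ i ∈ range n, (6 * i + 1) * (6 * i + 5)) * ((2 * n)! * (3 * n)!) := by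
  induction n with
  | zero => simp
  | succ n ih =>
    rw [show 6 * (n + 1) = 6 * n + 5 + 1 by ring, show 2 * (n + 1) = 2 * n + 1 + 1 by ring,
      show 3 * (n + 1) = 3 * n + 2 + 1 by ring]
    simp only [Nat.factorial_succ, prod_range_succ, pow_succ]
    calc _ = (6 * n + 1) * (6 * n + 2) * (6 * n + 3) * (6 * n + 4) * (6 * n + 5) * (6 * n + 6)
          * (n + 1) * ((6 * n)! * n !) := by ring
      _ = _ := by rw [ih]; ring

lemma two_mul_factorial_dvd_prod {n : ℕ} (hn : 0 < n) :
    2 * (2 * n + 1)! ∣ 12 ^ n * ∏ i ∈ range n, (6 * i + 1) * (6 * i + 5) := by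
  have h := two_mul_factorial_mul_factorial_mul_factorial_dvd hn
  rw [factorial_six_mul_mul_factorial] at h
  exact (Nat.mul_dvd_mul_iff_right (by positivity : 0 < (2 * n)! * (3 * n)!)).mp
    (by convert h using 1; ring)

lemma choose_mul_choose_mul_two_mul_factorial (n : ℕ) :
    (6 * n).choose (3 * n) * (3 * n).choose n * (2 * (2 * n + 1)!)
      = 2 * (2 * n + 1) * (2 * n).choose n *
        (12 ^ n * ∏ i ∈ range n, (6 * i + 1) * (6 * i + 5)) := by
  have h6 := Nat.choose_mul_factorial_mul_factorial (show 3 * n ≤ 6 * n by omega)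
  have h3 := Nat.choose_mul_factorial_mul_factorial (show n ≤ 3 * n by omega)
  have h2 := Nat.choose_mul_factorial_mul_factorial (show n ≤ 2 * n by omega)
  rw [show 6 * n - 3 * n = 3 * n by omega] at h6
  rw [show 3 * n - n = 2 * n by omega] at h3
  rw [show 2 * n - n = n by omega] at h2
  apply Nat.eq_of_mul_eq_mul_right (by positivity : 0 < (3 * n)! * (2 * n)! * n ! ^ 2)
  calc _ = (6 * n).choose (3 * n) * (3 * n)! * ((3 * n).choose n * n ! * (2 * n)!) * n !
        * (2 * (2 * n + 1) * (2 * n)!) := by rw [Nat.factorial_succ]; ring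
    _ = (6 * n)! * n ! * (2 * (2 * n + 1) * ((2 * n).choose n * n ! * n !)) := by
        rw [h3, h6, h2]
    _ = _ := by rw [factorial_six_mul_mul_factorial]; ring

theorem S_product_formula (n : ℕ) (hn : 0 < n) :
    (S n : ℚ) = 12 ^ n * (∏ i ∈ Finset.range n, ((6 * i + 1) * (6 * i + 5) : ℚ))
      / (2 * (Nat.factorial (2 * n + 1) : ℚ)) := by
  obtain ⟨q, hq⟩ := two_mul_factorial_dvd_prod hn
  have hS : S n = q := by
    refine Nat.div_eq_of_eq_mul_left (Nat.mul_pos (by positivity) (Nat.choose_pos (by omega))) ?_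
    refine Nat.eq_of_mul_eq_mul_right (by positivity : 0 < 2 * (2 * n + 1)!) ?_
    rw [choose_mul_choose_mul_two_mul_factorial, hq]
    ring
  rw [hS, eq_div_iff (by positivity)]
  exact_mod_cast (hq.trans (mul_comm _ _)).symm
end

section
/- For all real t and all real x with |x| ≤ 1, sin(t·arcsin(x)) = ∑_{n≥0} (-1)^n · t · (∏_{i=0}^{n-1} (t² - (2i+1)²)) · x^{2n+1}/(2n+1)!. -/
/-!
Write the series as `∑ c m * x ^ m` with `c` vanishing at even indices. Then
`(m + 1) (m + 2) c (m + 2) = (m ^ 2 - t ^ 2) c m`, which is the recursion forced by the differential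
equation `(1 - x ^ 2) y'' - x y' + t ^ 2 y = 0` of `y = sin (t * arcsin x)`. Substituting
`x = sin θ` turns it into `u'' = -t ^ 2 u`, so the difference `u` of the series and `sin (t θ)` on
`(-π/2, π/2)` has constant energy `u' ^ 2 + t ^ 2 u ^ 2`, which vanishes at `θ = 0`.
Since `|c (2n+3) / c (2n+1)|` eventually lies below the corresponding ratio of `(2n+1) ^ (-3/2)`,
the coefficients are absolutely summable, so the series converges uniformly on `[-1, 1]` and the
identity reaches the endpoints by continuity.
-/

open Real Finset

theorem summable_abs_of_abs_succ_mul_le {a b : ℕ → ℝ} (hb : ∀ n, 0 < b n) (hbs : Summable b)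
    (N : ℕ) (h : ∀ n ≥ N, |a (n + 1)| * b n ≤ |a n| * b (n + 1)) :
    Summable fun n => |a n| := by
  set K := |a N| / b N
  have key : ∀ m, |a (m + N)| ≤ K * b (m + N) := by
    intro m
    induction m with
    | zero => simp [K, div_mul_cancel₀ _ (hb N).ne']
    | succ m ih =>
      rw [show m + 1 + N = m + N + 1 by ring]
      refine le_of_mul_le_mul_right ?_ (hb (m + N))
      calc |a (m + N + 1)| * b (m + N) ≤ |a (m + N)| * b (m + N + 1) := h _ (by omega)
        _ ≤ K * b (m + N) * b (m + N + 1) := by gcongr; exact (hb _).le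
        _ = K * b (m + N + 1) * b (m + N) := by ring
  exact (summable_nat_add_iff N).1 <| .of_nonneg_of_le (fun _ => abs_nonneg _) key
    (((summable_nat_add_iff N).2 hbs).mul_left K)

theorem summable_one_div_two_mul_add_one_mul_sqrt :
    Summable fun n : ℕ => 1 / ((2 * n + 1 : ℝ) * √(2 * n + 1)) := by
  refine .of_nonneg_of_le (fun n => by positivity) (fun n => ?_)
    ((summable_nat_add_iff 1).2 (summable_one_div_nat_rpow.2 (by norm_num : (1:ℝ) < 3 / 2)))
  have hn : (0:ℝ) ≤ n + 1 := by positivity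
  have h32 : ((n + 1 : ℕ) : ℝ) ^ (3 / 2 : ℝ) = (n + 1) * √(n + 1) := by
    rw [sqrt_eq_rpow, ← rpow_one_add' hn (by norm_num)]; push_cast; norm_num
  rw [h32]
  gcongr <;> linarith

theorem sq_div_mul_one_div_mul_sqrt_le {a : ℝ} (ha : 0 < a) :
    a ^ 2 / ((a + 1) * (a + 2)) * (1 / (a * √a)) ≤ 1 / ((a + 2) * √(a + 2)) := by
  have hgm : √a * √(a + 2) ≤ a + 1 := by
    rw [← sqrt_mul ha.le, ← sqrt_sq (by linarith : 0 ≤ a + 1)]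
    exact sqrt_le_sqrt (by nlinarith)
  rw [div_mul_div_comm, mul_one, div_le_div_iff₀ (by positivity) (by positivity), one_mul]
  calc a ^ 2 * ((a + 2) * √(a + 2)) = a * (a + 2) * √a * (√a * √(a + 2)) := by
        linear_combination (a + 2) * √(a + 2) * a * (mul_self_sqrt ha.le).symm
    _ ≤ a * (a + 2) * √a * (a + 1) := by gcongr
    _ = (a + 1) * (a + 2) * (a * √a) := by ring

section PowerSeries

variable {c : ℕ → ℝ}

theorem summable_succ_mul_abs_mul_pow
    (hc : ∀ r, 0 ≤ r → r < 1 → Summable fun n => |c n| * r ^ n) :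
    ∀ r, 0 ≤ r → r < 1 → Summable fun n : ℕ => |(n + 1) * c (n + 1)| * r ^ n := by
  intro r hr₀ hr₁
  set ρ := (1 + r) / 2 with hρ
  have hρ₀ : 0 < ρ := by positivity
  have hρ₁ : ρ < 1 := by rw [hρ]; linarith
  set q := r / ρ
  have hq₀ : 0 ≤ q := div_nonneg hr₀ hρ₀.le
  have hq₁ : q < 1 := (div_lt_one hρ₀).2 (by rw [hρ]; linarith)
  set S := ∑' m, |c m| * ρ ^ m
  have hS : ∀ n, |c n| * ρ ^ n ≤ S :=
    fun n => (hc ρ hρ₀.le hρ₁).le_tsum n fun m _ => by positivity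
  have hgeom : Summable fun n : ℕ => ((n : ℝ) + 1) * q ^ n := by
    have hq : ‖q‖ < 1 := by rwa [norm_of_nonneg hq₀]
    simpa [add_mul] using
      (summable_pow_mul_geometric_of_norm_lt_one 1 hq).add
        (summable_geometric_of_lt_one hq₀ hq₁)
  refine .of_nonneg_of_le (fun n => by positivity) (fun n => ?_) (hgeom.mul_left (S / ρ))
  have hr : r = q * ρ := (div_mul_cancel₀ r hρ₀.ne').symm
  calc |(n + 1) * c (n + 1)| * r ^ n = |c (n + 1)| * ρ ^ (n + 1) * ((n + 1) * q ^ n) / ρ := by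
        rw [hr, mul_pow, abs_mul, abs_of_nonneg (by positivity : (0:ℝ) ≤ n + 1), pow_succ]
        field_simp
    _ ≤ S * ((n + 1) * q ^ n) / ρ := by gcongr; exact hS (n + 1)
    _ = S / ρ * ((n + 1) * q ^ n) := by ring

theorem summable_mul_pow_of_abs_lt
    (hc : ∀ r, 0 ≤ r → r < 1 → Summable fun n => |c n| * r ^ n) {x : ℝ} (hx : |x| < 1) :
    Summable fun n => c n * x ^ n :=
  .of_norm <| (hc |x| (abs_nonneg x) hx).congr fun n => by simp

theorem hasDerivAt_tsum_mul_pow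
    (hc : ∀ r, 0 ≤ r → r < 1 → Summable fun n => |c n| * r ^ n) {x : ℝ} (hx : |x| < 1) :
    HasDerivAt (fun y => ∑' n, c n * y ^ n) (∑' n : ℕ, (n + 1) * c (n + 1) * x ^ n) x := by
  set r := (|x| + 1) / 2 with hr
  have hr₀ : 0 ≤ r := by positivity
  have hr₁ : r < 1 := by rw [hr]; linarith
  have hxr : x ∈ Set.Ioo (-r) r := abs_lt.1 (by rw [hr]; linarith)
  have hu : Summable fun n : ℕ => n * |c n| * r ^ (n - 1) := by
    rw [← summable_nat_add_iff 1]
    refine (summable_succ_mul_abs_mul_pow hc r hr₀ hr₁).congr fun n => ?_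
    rw [abs_mul, abs_of_nonneg (by positivity : (0:ℝ) ≤ n + 1)]
    push_cast
    simp
  have hbound : ∀ n : ℕ, ∀ y ∈ Set.Ioo (-r) r,
      ‖c n * (n * y ^ (n - 1))‖ ≤ n * |c n| * r ^ (n - 1) := by
    intro n y hy
    rw [norm_mul, norm_mul, norm_pow, norm_natCast, norm_eq_abs, norm_eq_abs]
    have hyr : |y| ≤ r := abs_le.2 ⟨hy.1.le, hy.2.le⟩
    calc |c n| * (n * |y| ^ (n - 1)) = n * |c n| * |y| ^ (n - 1) := by ring
      _ ≤ _ := by gcongr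
  have h := hasDerivAt_tsum_of_isPreconnected hu isOpen_Ioo isPreconnected_Ioo
    (fun n y _ => (hasDerivAt_pow n y).const_mul (c n)) hbound
    hxr (summable_mul_pow_of_abs_lt hc hx) hxr
  rw [(Summable.of_norm_bounded hu fun n => hbound n x hxr).tsum_eq_zero_add] at h
  refine h.congr_deriv ?_
  simp only [CharP.cast_eq_zero, zero_mul, mul_zero, zero_add, Nat.add_sub_cancel, Nat.cast_succ]
  exact tsum_congr fun n => by ring

end PowerSeries

theorem eqOn_zero_of_hasDerivAt_of_hasDerivAt_neg_mul {k : ℝ} (hk : 0 ≤ k) {s : Set ℝ}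
    (hs : IsOpen s) (hs' : IsPreconnected s) {u u' : ℝ → ℝ}
    (hu : ∀ x ∈ s, HasDerivAt u (u' x) x) (hu' : ∀ x ∈ s, HasDerivAt u' (-k * u x) x)
    {x₀ : ℝ} (hx₀ : x₀ ∈ s) (h₀ : u x₀ = 0) (h₀' : u' x₀ = 0) : Set.EqOn u 0 s := by
  have const : ∀ f : ℝ → ℝ, (∀ x ∈ s, HasDerivAt f 0 x) → ∀ x ∈ s, f x = f x₀ :=
    fun f hf x hx => hs.is_const_of_deriv_eq_zero hs'
      (fun y hy => (hf y hy).differentiableAt.differentiableWithinAt)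
      (fun y hy => (hf y hy).deriv) hx hx₀
  have henergy : ∀ x ∈ s, u' x ^ 2 + k * u x ^ 2 = 0 := by
    intro x hx
    refine (const (fun x => u' x ^ 2 + k * u x ^ 2) (fun y hy => ?_) x hx).trans
      (by simp [h₀, h₀'])
    refine (((hu' y hy).pow 2).add (((hu y hy).pow 2).const_mul k)).congr_deriv ?_
    push_cast
    ring
  have hu'_zero : ∀ x ∈ s, u' x = 0 := fun x hx =>
    pow_eq_zero_iff two_ne_zero |>.1 <| by
      nlinarith [henergy x hx, sq_nonneg (u' x), mul_nonneg hk (sq_nonneg (u x))]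
  intro x hx
  exact (const u (fun y hy => hu'_zero y hy ▸ hu y hy) x hx).trans h₀

noncomputable def sinArcsinCoeff (t : ℝ) : ℕ → ℝ
  | 0 => 0
  | 1 => t
  | m + 2 => (m ^ 2 - t ^ 2) * sinArcsinCoeff t m / ((m + 1) * (m + 2))

namespace sinArcsinCoeff

theorem apply_two_mul (t : ℝ) (n : ℕ) : sinArcsinCoeff t (2 * n) = 0 := by
  induction n with
  | zero => rfl
  | succ n ih => rw [Nat.mul_succ, sinArcsinCoeff, ih, mul_zero, zero_div]

theorem apply_two_mul_add_one (t : ℝ) (n : ℕ) :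
    sinArcsinCoeff t (2 * n + 1) = (-1) ^ n * t *
      (∏ i ∈ range n, (t ^ 2 - (2 * (i : ℝ) + 1) ^ 2)) / (2 * n + 1).factorial := by
  induction n with
  | zero => simp [sinArcsinCoeff]
  | succ n ih =>
    have hfact : ((2 * n + 1 + 2).factorial : ℝ) =
        (2 * n + 3) * (2 * n + 2) * (2 * n + 1).factorial := by
      rw [Nat.factorial_succ, Nat.factorial_succ]; push_cast; ring
    rw [show 2 * (n + 1) + 1 = 2 * n + 1 + 2 by ring, sinArcsinCoeff, ih, prod_range_succ, hfact]
    push_cast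
    field_simp
    ring

theorem eq_zero_of_notMem_range (t : ℝ) {m : ℕ} (hm : m ∉ Set.range fun n => 2 * n + 1) :
    sinArcsinCoeff t m = 0 := by
  obtain ⟨n, rfl | rfl⟩ := Nat.even_or_odd' m
  · exact apply_two_mul t n
  · exact absurd ⟨n, rfl⟩ hm

theorem abs_apply_two_mul_add_three_le (t : ℝ) {n : ℕ} (hn : |t| ≤ 2 * n + 1) :
    |sinArcsinCoeff t (2 * (n + 1) + 1)| ≤
      (2 * n + 1) ^ 2 / ((2 * n + 1 + 1) * (2 * n + 1 + 2)) * |sinArcsinCoeff t (2 * n + 1)| := by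
  have hnum : |((2 * n + 1 : ℕ) : ℝ) ^ 2 - t ^ 2| ≤ (2 * n + 1) ^ 2 := by
    push_cast
    rw [abs_le]
    constructor <;> nlinarith [sq_abs t, abs_nonneg t]
  rw [show 2 * (n + 1) + 1 = 2 * n + 1 + 2 by ring, sinArcsinCoeff, abs_div, abs_mul,
    abs_of_pos (by positivity : (0:ℝ) < ((2 * n + 1 : ℕ) + 1) * ((2 * n + 1 : ℕ) + 2))]
  push_cast at hnum ⊢
  rw [mul_div_right_comm]
  gcongr

theorem summable_abs (t : ℝ) : Summable fun m => |sinArcsinCoeff t m| := by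
  have hodd : Summable fun n => |sinArcsinCoeff t (2 * n + 1)| := by
    refine summable_abs_of_abs_succ_mul_le (fun n => by positivity)
      summable_one_div_two_mul_add_one_mul_sqrt ⌈|t|⌉₊ fun n hn => ?_
    have htn : |t| ≤ 2 * n + 1 := by linarith [Nat.ceil_le.1 hn]
    calc _ ≤ (2 * n + 1) ^ 2 / ((2 * n + 1 + 1) * (2 * n + 1 + 2)) *
          |sinArcsinCoeff t (2 * n + 1)| * (1 / ((2 * n + 1 : ℝ) * √(2 * n + 1))) := by
          gcongr; exact abs_apply_two_mul_add_three_le t htn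
      _ = |sinArcsinCoeff t (2 * n + 1)| * ((2 * n + 1) ^ 2 / ((2 * n + 1 + 1) * (2 * n + 1 + 2)) *
          (1 / ((2 * n + 1 : ℝ) * √(2 * n + 1)))) := by ring
      _ ≤ |sinArcsinCoeff t (2 * n + 1)| * (1 / ((2 * n + 1 + 2 : ℝ) * √(2 * n + 1 + 2))) := by
          gcongr; exact sq_div_mul_one_div_mul_sqrt_le (by positivity)
      _ = _ := by push_cast; ring_nf
  exact (Function.Injective.summable_iff (g := fun n => 2 * n + 1)
    (fun a b h => by simp only at h; omega)
    fun m hm => by rw [eq_zero_of_notMem_range t hm, abs_zero]).1 hodd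

theorem summable_abs_mul_pow (t : ℝ) :
    ∀ r, 0 ≤ r → r < 1 → Summable fun m => |sinArcsinCoeff t m| * r ^ m :=
  fun r hr₀ hr₁ => .of_nonneg_of_le (fun m => by positivity)
    (fun m => mul_le_of_le_one_right (abs_nonneg _) (pow_le_one₀ hr₀ hr₁.le)) (summable_abs t)

theorem ode (t : ℝ) {x : ℝ} (hx : |x| < 1) :
    (1 - x ^ 2) * (∑' n : ℕ, (n + 1) * ((↑(n + 1) + 1) * sinArcsinCoeff t (n + 1 + 1)) * x ^ n)
      - x * (∑' n : ℕ, (n + 1) * sinArcsinCoeff t (n + 1) * x ^ n)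
      + t ^ 2 * ∑' n, sinArcsinCoeff t n * x ^ n = 0 := by
  have hc := summable_abs_mul_pow t
  have hd := summable_succ_mul_abs_mul_pow hc
  have h₀ := (summable_mul_pow_of_abs_lt hc hx).hasSum
  have h₁ := (summable_mul_pow_of_abs_lt hd hx).hasSum
  have h₂ := (summable_mul_pow_of_abs_lt (summable_succ_mul_abs_mul_pow hd) hx).hasSum
  have hxh₁ : HasSum (fun m : ℕ => m * sinArcsinCoeff t m * x ^ m)
      (x * ∑' n : ℕ, (n + 1) * sinArcsinCoeff t (n + 1) * x ^ n) := by
    refine (hasSum_nat_add_iff' 1).1 ?_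
    simp only [sum_range_one, CharP.cast_eq_zero, zero_mul, sub_zero]
    exact (h₁.mul_left x).congr_fun fun n => by push_cast; ring
  have hx2h₂ : HasSum (fun m : ℕ => m * (m - 1) * sinArcsinCoeff t m * x ^ m)
      (x ^ 2 * ∑' n : ℕ, (n + 1) * ((↑(n + 1) + 1) * sinArcsinCoeff t (n + 1 + 1)) * x ^ n) := by
    refine (hasSum_nat_add_iff' 2).1 ?_
    simp only [sum_range_succ, range_zero, sum_empty, Nat.cast_zero, Nat.cast_one, zero_mul,
      sub_self, mul_zero, zero_add, sub_zero]
    exact (h₂.mul_left (x ^ 2)).congr_fun fun n => by push_cast; ring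
  have hh₂ : HasSum (fun m : ℕ => (m ^ 2 - t ^ 2) * sinArcsinCoeff t m * x ^ m)
      (∑' n : ℕ, (n + 1) * ((↑(n + 1) + 1) * sinArcsinCoeff t (n + 1 + 1)) * x ^ n) := by
    refine h₂.congr_fun fun n => ?_
    rw [sinArcsinCoeff]
    push_cast
    field_simp
    ring
  have hsum := ((hh₂.sub hx2h₂).sub hxh₁).add (h₀.mul_left (t ^ 2))
  linear_combination hsum.unique (hasSum_zero.congr_fun fun m => by ring)

theorem tsum_mul_sin_pow (t : ℝ) {θ : ℝ} (hθ : θ ∈ Set.Ioo (-(π / 2)) (π / 2)) :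
    ∑' m, sinArcsinCoeff t m * sin θ ^ m = sin (t * θ) := by
  have hsin : ∀ θ ∈ Set.Ioo (-(π / 2)) (π / 2), |sin θ| < 1 := fun θ hθ => by
    rw [← sq_lt_one_iff_abs_lt_one]
    nlinarith [sin_sq_add_cos_sq θ, cos_pos_of_mem_Ioo hθ]
  have hc := summable_abs_mul_pow t
  have hd := summable_succ_mul_abs_mul_pow hc
  have hlin : ∀ θ, HasDerivAt (fun θ => t * θ) t θ := fun θ => by
    simpa using (hasDerivAt_id θ).const_mul t
  refine sub_eq_zero.1 <| eqOn_zero_of_hasDerivAt_of_hasDerivAt_neg_mul (sq_nonneg t)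
    isOpen_Ioo isPreconnected_Ioo
    (u := fun θ => ∑' m, sinArcsinCoeff t m * sin θ ^ m - sin (t * θ))
    (u' := fun θ => (∑' n : ℕ, (n + 1) * sinArcsinCoeff t (n + 1) * sin θ ^ n) * cos θ
      - t * cos (t * θ))
    (fun θ hθ => ?_) (fun θ hθ => ?_) (x₀ := 0) (by simp [pi_pos]) ?_ ?_ hθ
  · refine (((hasDerivAt_tsum_mul_pow hc (hsin θ hθ)).comp θ (hasDerivAt_sin θ)).sub
      (hlin θ).sin).congr_deriv ?_
    ring
  · refine ((((hasDerivAt_tsum_mul_pow hd (hsin θ hθ)).comp θ (hasDerivAt_sin θ)).mul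
      (hasDerivAt_cos θ)).sub ((hlin θ).cos.const_mul t)).congr_deriv ?_
    have := ode t (hsin θ hθ)
    rw [← cos_sq'] at this
    simp only [Function.comp_apply]
    linear_combination this
  · rw [tsum_eq_single 0 fun n hn => by simp [hn]]
    simp [sinArcsinCoeff]
  · rw [tsum_eq_single 0 fun n hn => by simp [hn]]
    simp [sinArcsinCoeff]

theorem hasSum_mul_pow (t : ℝ) {x : ℝ} (hx : |x| ≤ 1) :
    HasSum (fun m => sinArcsinCoeff t m * x ^ m) (sin (t * arcsin x)) := by
  have hbound : ∀ {y : ℝ}, |y| ≤ 1 → ∀ m,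
      ‖sinArcsinCoeff t m * y ^ m‖ ≤ |sinArcsinCoeff t m| := fun hy m => by
    rw [norm_mul, norm_pow, norm_eq_abs, norm_eq_abs]
    exact mul_le_of_le_one_right (abs_nonneg _) (pow_le_one₀ (abs_nonneg _) hy)
  have hcont : Continuous fun θ => ∑' m, sinArcsinCoeff t m * sin θ ^ m :=
    continuous_tsum (fun m => by fun_prop) (summable_abs t) fun m θ => hbound (abs_sin_le_one θ) m
  have heq := Set.EqOn.closure (fun θ hθ => tsum_mul_sin_pow t hθ) hcont (by fun_prop)
  rw [closure_Ioo (by linarith [pi_pos])] at heq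
  have hx' := abs_le.1 hx
  have htsum : ∑' m, sinArcsinCoeff t m * x ^ m = sin (t * arcsin x) := by
    simpa only [sin_arcsin hx'.1 hx'.2] using heq (arcsin_mem_Icc x)
  exact htsum ▸ (Summable.of_norm_bounded (summable_abs t) (hbound hx)).hasSum

end sinArcsinCoeff

theorem sin_t_arcsin_series (t x : ℝ) (hx : |x| ≤ 1) :
    HasSum (fun n : ℕ =>
      (-1) ^ n * t * (∏ i ∈ Finset.range n, (t ^ 2 - (2 * (i : ℝ) + 1) ^ 2))
        * x ^ (2 * n + 1) / Nat.factorial (2 * n + 1))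
      (Real.sin (t * Real.arcsin x)) := by
  have h := sinArcsinCoeff.hasSum_mul_pow t hx
  rw [← (Function.Injective.hasSum_iff (g := fun n => 2 * n + 1)
    (fun a b h => by simp only at h; omega)
    fun m hm => by rw [sinArcsinCoeff.eq_zero_of_notMem_range t hm, zero_mul])] at h
  refine h.congr_fun fun n => ?_
  simp only [Function.comp_apply, sinArcsinCoeff.apply_two_mul_add_one]
  ring
end

section
/- For all real t and all real x with |x| ≤ 1, cos(t·arcsin(x)) = ∑_{n≥0} (-1)^n · (∏_{i=0}^{n-1} (t² - (2i)²)) · x^{2n}/(2n)!. -/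
/-
Write `a n` for the coefficients of the statement and `P y = ∑ a n * y ^ n`, so that the
series is `P (x ^ 2)`. The recurrence `(2n+1)(2n+2) a (n+1) = ((2n)² - t²) a n` says that `P`
solves the hypergeometric equation `4y(1-y) P'' + 2(1-2y) P' + t² P = 0` on `(-1, 1)`, hence
`u θ = P (sin θ ^ 2)` solves `u'' = -t² u` on `(-π/2, π/2)` with `u 0 = 1` and `u' 0 = 0`.
Conservation of the energy `w' ^ 2 + t² w ^ 2` of `w = u - cos (t * ·)` gives `u θ = cos (t θ)`.
The same recurrence gives `|a (n+1) / a n| ≤ (n / (n+1)) ^ (3/2)` once `n ≥ |t|`, so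
`∑ |a n| < ∞`; then `P` is continuous on `[-1, 1]` and the identity extends to `θ = ±π/2`,
that is, to `|x| = 1`.
-/

open Real Filter Topology Set FormalMultilinearSeries

section PowerSeries

-- an elementary form of `1 ≤ (ofScalars ℝ c).radius`
def OneLeRadius (c : ℕ → ℝ) : Prop :=
  ∀ r : ℝ, 0 ≤ r → r < 1 → Summable fun n => |c n| * r ^ n

def derivCoeff (c : ℕ → ℝ) (n : ℕ) : ℝ := (n + 1) * c (n + 1)

variable {c : ℕ → ℝ}

theorem abs_mul_pow_le_abs {y : ℝ} (hy : |y| ≤ 1) (n : ℕ) : |c n * y ^ n| ≤ |c n| := by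
  rw [abs_mul, abs_pow]
  exact mul_le_of_le_one_right (abs_nonneg _) (pow_le_one₀ (abs_nonneg y) hy)

theorem hasSum_ofScalarsSum_of_summable_abs (hc : Summable fun n => |c n|) {y : ℝ}
    (hy : |y| ≤ 1) : HasSum (fun n => c n * y ^ n) (ofScalarsSum c y) := by
  rw [ofScalars_sum_eq]
  exact (hc.of_nonneg_of_le (fun n => abs_nonneg _) (abs_mul_pow_le_abs hy)).of_abs.hasSum

theorem continuousOn_ofScalarsSum_of_summable_abs (hc : Summable fun n => |c n|) :
    ContinuousOn (ofScalarsSum c) (Icc (-1 : ℝ) 1) := by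
  rw [ofScalarsSum_eq_tsum]
  exact continuousOn_tsum (fun n => ((continuous_pow n).const_smul (c n)).continuousOn) hc
    fun n y hy => abs_mul_pow_le_abs (abs_le.mpr ⟨hy.1, hy.2⟩) n

theorem oneLeRadius_of_summable_abs (hc : Summable fun n => |c n|) : OneLeRadius c :=
  fun r hr0 hr1 => hc.of_nonneg_of_le (fun n => by positivity) fun n => by
    have := abs_mul_pow_le_abs (c := c) (y := r) (by rw [abs_of_nonneg hr0]; exact hr1.le) n
    rwa [abs_mul, abs_pow, abs_of_nonneg hr0] at this

theorem OneLeRadius.hasSum (hc : OneLeRadius c) {y : ℝ} (hy : |y| < 1) :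
    HasSum (fun n => c n * y ^ n) (ofScalarsSum c y) := by
  rw [ofScalars_sum_eq]
  exact Summable.hasSum <| .of_abs <| by simpa [abs_mul, abs_pow] using hc |y| (abs_nonneg y) hy

theorem OneLeRadius.derivCoeff (hc : OneLeRadius c) : OneLeRadius (derivCoeff c) := by
  intro r hr0 hr1
  obtain ⟨s, hrs, hs1⟩ := exists_between hr1
  have hs0 : 0 < s := hr0.trans_lt hrs
  have hq0 : 0 ≤ r / s := by positivity
  have hq1 : r / s < 1 := (div_lt_one hs0).mpr hrs
  have hshift : Summable fun n => |c (n + 1)| * s ^ (n + 1) :=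
    (summable_nat_add_iff 1).mpr (hc s hs0.le hs1)
  -- `(n + 1) * r ^ n` is `s ^ (n + 1)` times a null sequence
  have hlim : Tendsto (fun n : ℕ => ((n : ℝ) + 1) * (r / s) ^ n / s) atTop (𝓝 0) := by
    simpa [add_mul] using ((tendsto_self_mul_const_pow_of_lt_one hq0 hq1).add
      (tendsto_pow_atTop_nhds_zero_of_lt_one hq0 hq1)).div_const s
  refine (Summable.mul_tendsto_const (f := fun n => |c (n + 1)| * s ^ (n + 1))
    (g := fun n : ℕ => ((n : ℝ) + 1) * (r / s) ^ n / s) hshift.norm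
    (by rwa [Nat.cofinite_eq_atTop])).congr fun n => ?_
  rw [_root_.derivCoeff, abs_mul, abs_of_nonneg (by positivity : (0 : ℝ) ≤ n + 1), div_pow]
  field_simp
  ring

theorem hasDerivAt_ofScalarsSum (hc : OneLeRadius c) {y : ℝ} (hy : |y| < 1) :
    HasDerivAt (ofScalarsSum c) (ofScalarsSum (derivCoeff c) y) y := by
  obtain ⟨r, hyr, hr1⟩ := exists_between hy
  have hr0 : 0 ≤ r := (abs_nonneg y).trans hyr.le
  have hu : Summable fun n => |c n| * (n * r ^ (n - 1)) := by
    refine (summable_nat_add_iff 1).mp ((hc.derivCoeff r hr0 hr1).congr fun n => ?_)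
    rw [_root_.derivCoeff, abs_mul, abs_of_nonneg (by positivity : (0 : ℝ) ≤ n + 1)]
    push_cast
    ring
  have hbound : ∀ n, ∀ z ∈ Metric.ball (0 : ℝ) r,
      ‖c n * (n * z ^ (n - 1))‖ ≤ |c n| * (n * r ^ (n - 1)) := by
    intro n z hz
    rw [mem_ball_zero_iff, Real.norm_eq_abs] at hz
    rw [Real.norm_eq_abs, abs_mul, abs_mul, abs_pow, Nat.abs_cast]
    gcongr
  have hy' : y ∈ Metric.ball (0 : ℝ) r := by simpa using hyr
  have hderiv := hasDerivAt_tsum_of_isPreconnected hu Metric.isOpen_ball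
    (convex_ball (0 : ℝ) r).isPreconnected (g := fun n z => c n * z ^ n)
    (fun n z _ => (hasDerivAt_pow n z).const_mul (c n)) hbound
    (Metric.mem_ball_self (hyr.trans_le' (abs_nonneg y)))
    (hc.hasSum (by simp)).summable hy'
  rw [show (fun z => ∑' n, c n * z ^ n) = ofScalarsSum c from (ofScalarsSum_eq_tsum c).symm,
    (Summable.of_norm_bounded hu fun n => hbound n y hy').tsum_eq_zero_add, Nat.cast_zero,
    zero_mul, mul_zero, zero_add] at hderiv
  have hsum : ofScalarsSum (derivCoeff c) y =
      ∑' n, c (n + 1) * ((n + 1 : ℕ) * y ^ (n + 1 - 1)) := by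
    refine (ofScalars_sum_eq _ y).trans (tsum_congr fun n => ?_)
    rw [smul_eq_mul, _root_.derivCoeff, Nat.add_sub_cancel]
    push_cast
    ring
  rwa [hsum]

theorem abs_sin_sq_lt_one {θ : ℝ} (hθ : cos θ ≠ 0) : |sin θ ^ 2| < 1 := by
  rw [abs_of_nonneg (sq_nonneg _)]
  nlinarith [pow_pos (abs_pos.mpr hθ) 2, sq_abs (cos θ), sin_sq_add_cos_sq θ]

theorem hasDerivAt_ofScalarsSum_sin_sq (hc : OneLeRadius c) {θ : ℝ} (hθ : cos θ ≠ 0) :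
    HasDerivAt (fun θ => ofScalarsSum c (sin θ ^ 2))
      (2 * sin θ * cos θ * ofScalarsSum (derivCoeff c) (sin θ ^ 2)) θ := by
  refine ((hasDerivAt_ofScalarsSum hc (abs_sin_sq_lt_one hθ)).comp θ
    ((hasDerivAt_sin θ).fun_pow 2)).congr_deriv ?_
  push_cast
  ring

theorem hasSum_mul_pow_of_hasSum_succ {g : ℕ → ℝ} {y s : ℝ} (hg : g 0 = 0)
    (h : HasSum (fun n => g (n + 1) * y ^ n) s) : HasSum (fun n => g n * y ^ n) (y * s) := by
  refine (hasSum_nat_add_iff' 1).mp ?_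
  simp only [Finset.range_one, Finset.sum_singleton, hg, zero_mul, sub_zero, pow_succ]
  refine (h.mul_left y).congr_fun fun n => ?_
  ring

end PowerSeries

theorem summable_abs_of_cube_mul_sq_le {a : ℕ → ℝ} {B : ℝ}
    (h : ∀ᶠ n : ℕ in atTop, (n : ℝ) ^ 3 * a n ^ 2 ≤ B) : Summable fun n => |a n| := by
  have hp : Summable fun n : ℕ => √B * (n : ℝ) ^ (-(3 / 2) : ℝ) :=
    (summable_nat_rpow.mpr (by norm_num)).mul_left _
  refine hp.of_norm_bounded_eventually_nat ?_
  filter_upwards [h, eventually_gt_atTop 0] with n hn hn0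
  have hpos : (0 : ℝ) < (n : ℝ) ^ (3 / 2 : ℝ) := by positivity
  rw [Real.rpow_neg (Nat.cast_nonneg n), ← div_eq_mul_inv, le_div_iff₀ hpos, norm_abs_eq_norm,
    Real.norm_eq_abs, Real.le_sqrt (by positivity)
      ((by positivity : (0 : ℝ) ≤ n ^ 3 * a n ^ 2).trans hn), mul_pow, sq_abs,
    ← Real.rpow_mul_natCast (by positivity)]
  norm_num
  linarith

theorem eqOn_zero_of_hasDerivAt_neg_sq_mul {s : Set ℝ} (hs : IsOpen s) (hs' : IsPreconnected s)
    {f f' : ℝ → ℝ} {k θ₀ : ℝ} (hθ₀ : θ₀ ∈ s) (hf : ∀ θ ∈ s, HasDerivAt f (f' θ) θ)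
    (hf' : ∀ θ ∈ s, HasDerivAt f' (-k ^ 2 * f θ) θ) (h0 : f θ₀ = 0) (h0' : f' θ₀ = 0) :
    EqOn f 0 s := by
  have hconst : ∀ g : ℝ → ℝ, (∀ θ ∈ s, HasDerivAt g 0 θ) → ∀ θ ∈ s, g θ = g θ₀ :=
    fun g hg θ hθ => hs.is_const_of_deriv_eq_zero hs'
      (fun x hx => (hg x hx).differentiableAt.differentiableWithinAt)
      (fun x hx => (hg x hx).deriv) hθ hθ₀
  -- the energy `f' ^ 2 + k ^ 2 * f ^ 2` is conserved
  have henergy : ∀ θ ∈ s, f' θ ^ 2 + k ^ 2 * f θ ^ 2 = 0 := by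
    intro θ hθ
    rw [hconst (fun θ => f' θ ^ 2 + k ^ 2 * f θ ^ 2) (fun x hx => ?_) θ hθ, h0, h0']
    · ring
    · exact (((hf' x hx).fun_pow 2).fun_add
        (((hf x hx).fun_pow 2).const_mul (k ^ 2))).congr_deriv (by push_cast; ring)
  have hderiv : ∀ θ ∈ s, HasDerivAt f 0 θ := fun θ hθ => by
    have : f' θ = 0 := by nlinarith [henergy θ hθ, sq_nonneg (f' θ), sq_nonneg (k * f θ)]
    exact this ▸ hf θ hθ
  intro θ hθ
  exact (hconst f hderiv θ hθ).trans h0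

noncomputable def cosArcsinCoeff (t : ℝ) (n : ℕ) : ℝ :=
  (-1) ^ n * (∏ i ∈ Finset.range n, (t ^ 2 - (2 * (i : ℝ)) ^ 2)) / (2 * n).factorial

theorem cosArcsinCoeff_zero (t : ℝ) : cosArcsinCoeff t 0 = 1 := by
  simp [cosArcsinCoeff]

theorem cosArcsinCoeff_succ (t : ℝ) (n : ℕ) :
    (2 * n + 1) * (2 * n + 2) * cosArcsinCoeff t (n + 1) =
      ((2 * n) ^ 2 - t ^ 2) * cosArcsinCoeff t n := by
  have hfact :
      ((2 * (n + 1)).factorial : ℝ) = (2 * n + 1) * (2 * n + 2) * (2 * n).factorial := by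
    rw [show 2 * (n + 1) = 2 * n + 1 + 1 by ring, Nat.factorial_succ, Nat.factorial_succ]
    push_cast
    ring
  rw [cosArcsinCoeff, cosArcsinCoeff, Finset.prod_range_succ, hfact]
  field_simp
  ring

theorem cube_mul_sq_cosArcsinCoeff_succ_le {t : ℝ} {n : ℕ} (htn : t ^ 2 ≤ (n : ℝ) ^ 2) :
    ((n : ℝ) + 1) ^ 3 * cosArcsinCoeff t (n + 1) ^ 2 ≤ (n : ℝ) ^ 3 * cosArcsinCoeff t n ^ 2 := by
  set D : ℝ := (2 * n + 1) * (2 * n + 2)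
  have hrec : D ^ 2 * cosArcsinCoeff t (n + 1) ^ 2 =
      ((2 * n) ^ 2 - t ^ 2) ^ 2 * cosArcsinCoeff t n ^ 2 := by
    rw [← mul_pow, ← mul_pow, cosArcsinCoeff_succ]
  have hnum : ((2 * (n : ℝ)) ^ 2 - t ^ 2) ^ 2 ≤ (4 * (n : ℝ) ^ 2) ^ 2 := by
    nlinarith [sq_nonneg t]
  have hden : ((n : ℝ) + 1) ^ 3 * (4 * (n : ℝ) ^ 2) ^ 2 ≤ (n : ℝ) ^ 3 * D ^ 2 := by
    nlinarith [(by positivity : (0 : ℝ) ≤ 4 * n ^ 3 * (n + 1) ^ 2)]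
  refine le_of_mul_le_mul_left ?_ (by positivity : (0 : ℝ) < D ^ 2)
  calc D ^ 2 * (((n : ℝ) + 1) ^ 3 * cosArcsinCoeff t (n + 1) ^ 2)
      = ((n : ℝ) + 1) ^ 3 * ((2 * n) ^ 2 - t ^ 2) ^ 2 * cosArcsinCoeff t n ^ 2 := by
        linear_combination ((n : ℝ) + 1) ^ 3 * hrec
    _ ≤ ((n : ℝ) + 1) ^ 3 * (4 * (n : ℝ) ^ 2) ^ 2 * cosArcsinCoeff t n ^ 2 := by gcongr
    _ ≤ (n : ℝ) ^ 3 * D ^ 2 * cosArcsinCoeff t n ^ 2 := by gcongr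
    _ = D ^ 2 * ((n : ℝ) ^ 3 * cosArcsinCoeff t n ^ 2) := by ring

theorem summable_abs_cosArcsinCoeff (t : ℝ) : Summable fun n => |cosArcsinCoeff t n| := by
  set N := ⌈|t|⌉₊
  refine summable_abs_of_cube_mul_sq_le (B := (N : ℝ) ^ 3 * cosArcsinCoeff t N ^ 2) ?_
  filter_upwards [eventually_ge_atTop N] with n hn
  induction n, hn using Nat.le_induction with
  | base => exact le_rfl
  | succ n hn ih =>
    have htn : t ^ 2 ≤ (n : ℝ) ^ 2 := by
      rw [← sq_abs]
      exact pow_le_pow_left₀ (abs_nonneg t) ((Nat.le_ceil _).trans (by exact_mod_cast hn)) 2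
    push_cast
    exact (cube_mul_sq_cosArcsinCoeff_succ_le htn).trans ih

theorem oneLeRadius_cosArcsinCoeff (t : ℝ) : OneLeRadius (cosArcsinCoeff t) :=
  oneLeRadius_of_summable_abs (summable_abs_cosArcsinCoeff t)

-- The equation of `y ↦ cos (t * arcsin √y)`; coefficientwise it is `cosArcsinCoeff_succ`.
theorem ofScalarsSum_cosArcsinCoeff_ode (t : ℝ) {y : ℝ} (hy : |y| < 1) :
    4 * y * (1 - y) * ofScalarsSum (derivCoeff (derivCoeff (cosArcsinCoeff t))) y
      + 2 * (1 - 2 * y) * ofScalarsSum (derivCoeff (cosArcsinCoeff t)) y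
      + t ^ 2 * ofScalarsSum (cosArcsinCoeff t) y = 0 := by
  set a := cosArcsinCoeff t
  have ha := oneLeRadius_cosArcsinCoeff t
  have h0 := ha.hasSum hy
  have h1 := ha.derivCoeff.hasSum hy
  have h2 := ha.derivCoeff.derivCoeff.hasSum hy
  have hy1 : HasSum (fun n => n * a n * y ^ n) (y * ofScalarsSum (derivCoeff a) y) :=
    hasSum_mul_pow_of_hasSum_succ (by simp) (by simpa [derivCoeff] using h1)
  have hy2 : HasSum (fun n => n * derivCoeff a n * y ^ n)
      (y * ofScalarsSum (derivCoeff (derivCoeff a)) y) :=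
    hasSum_mul_pow_of_hasSum_succ (by simp) (by simpa [derivCoeff] using h2)
  have hyy2 : HasSum (fun n => (n - 1) * n * a n * y ^ n)
      (y * (y * ofScalarsSum (derivCoeff (derivCoeff a)) y)) :=
    hasSum_mul_pow_of_hasSum_succ (by simp) (by simpa [derivCoeff, mul_assoc] using hy2)
  have hsum := ((((hy2.mul_left 4).sub (hyy2.mul_left 4)).add (h1.mul_left 2)).sub
    (hy1.mul_left 4)).add (h0.mul_left (t ^ 2))
  have hzero : ∀ n : ℕ, 4 * (n * derivCoeff a n * y ^ n) - 4 * ((n - 1) * n * a n * y ^ n)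
      + 2 * (derivCoeff a n * y ^ n) - 4 * (n * a n * y ^ n) + t ^ 2 * (a n * y ^ n) = 0 := by
    intro n
    rw [derivCoeff]
    linear_combination y ^ n * cosArcsinCoeff_succ t n
  rw [funext hzero] at hsum
  linear_combination hsum.unique hasSum_zero

theorem ofScalarsSum_cosArcsinCoeff_sin_sq_eqOn_Ioo (t : ℝ) :
    EqOn (fun θ => ofScalarsSum (cosArcsinCoeff t) (sin θ ^ 2)) (fun θ => cos (t * θ))
      (Ioo (-(π / 2)) (π / 2)) := by
  set a := cosArcsinCoeff t
  have ha := oneLeRadius_cosArcsinCoeff t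
  have hf : ∀ θ ∈ Ioo (-(π / 2)) (π / 2),
      HasDerivAt (fun θ => ofScalarsSum a (sin θ ^ 2) - cos (t * θ))
        (2 * sin θ * cos θ * ofScalarsSum (derivCoeff a) (sin θ ^ 2) + t * sin (t * θ)) θ := by
    intro θ hθ
    refine ((hasDerivAt_ofScalarsSum_sin_sq ha (cos_pos_of_mem_Ioo hθ).ne').fun_sub
      (hasDerivAt_const_mul t).cos).congr_deriv ?_
    ring
  have hf' : ∀ θ ∈ Ioo (-(π / 2)) (π / 2),
      HasDerivAt (fun θ => 2 * sin θ * cos θ * ofScalarsSum (derivCoeff a) (sin θ ^ 2)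
          + t * sin (t * θ))
        (-t ^ 2 * (ofScalarsSum a (sin θ ^ 2) - cos (t * θ))) θ := by
    intro θ hθ
    refine ((((hasDerivAt_sin θ).const_mul 2).fun_mul (hasDerivAt_cos θ)).fun_mul
      (hasDerivAt_ofScalarsSum_sin_sq ha.derivCoeff (cos_pos_of_mem_Ioo hθ).ne')).fun_add
      ((hasDerivAt_const_mul t).sin.const_mul t) |>.congr_deriv ?_
    linear_combination
      ofScalarsSum_cosArcsinCoeff_ode t (abs_sin_sq_lt_one (cos_pos_of_mem_Ioo hθ).ne')
      + (2 * ofScalarsSum (derivCoeff a) (sin θ ^ 2)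
        + 4 * sin θ ^ 2 * ofScalarsSum (derivCoeff (derivCoeff a)) (sin θ ^ 2))
        * sin_sq_add_cos_sq θ
  have h0 : (0 : ℝ) ∈ Ioo (-(π / 2)) (π / 2) := by constructor <;> linarith [pi_pos]
  have h := eqOn_zero_of_hasDerivAt_neg_sq_mul isOpen_Ioo isPreconnected_Ioo h0 hf hf'
    (by simp [a, cosArcsinCoeff_zero]) (by simp)
  exact fun θ hθ => sub_eq_zero.mp (h hθ)

theorem ofScalarsSum_cosArcsinCoeff_sin_sq {t θ : ℝ} (hθ : θ ∈ Icc (-(π / 2)) (π / 2)) :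
    ofScalarsSum (cosArcsinCoeff t) (sin θ ^ 2) = cos (t * θ) := by
  have hcont : Continuous fun θ => ofScalarsSum (cosArcsinCoeff t) (sin θ ^ 2) :=
    (continuousOn_ofScalarsSum_of_summable_abs (summable_abs_cosArcsinCoeff t)).comp_continuous
      (by fun_prop) fun θ => ⟨by nlinarith [sin_sq_le_one θ, sq_nonneg (sin θ)], sin_sq_le_one θ⟩
  have h := (ofScalarsSum_cosArcsinCoeff_sin_sq_eqOn_Ioo t).closure hcont (by fun_prop)
  rw [closure_Ioo (by linarith [pi_pos])] at h
  exact h hθ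

theorem cos_t_arcsin_series (t x : ℝ) (hx : |x| ≤ 1) :
    HasSum (fun n : ℕ =>
      (-1) ^ n * (∏ i ∈ Finset.range n, (t ^ 2 - (2 * (i : ℝ)) ^ 2))
        * x ^ (2 * n) / Nat.factorial (2 * n))
      (Real.cos (t * Real.arcsin x)) := by
  obtain ⟨hx₁, hx₂⟩ := abs_le.mp hx
  have hsum := hasSum_ofScalarsSum_of_summable_abs (summable_abs_cosArcsinCoeff t)
    (y := x ^ 2) (by rw [abs_pow]; exact pow_le_one₀ (abs_nonneg x) hx)
  have hval : ofScalarsSum (cosArcsinCoeff t) (x ^ 2) = cos (t * arcsin x) := by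
    simpa only [sin_arcsin hx₁ hx₂] using
      ofScalarsSum_cosArcsinCoeff_sin_sq (t := t) (arcsin_mem_Icc x)
  rw [hval] at hsum
  refine hsum.congr_fun fun n => ?_
  rw [cosArcsinCoeff, pow_mul]
  ring
end

section
/- For any prime p, (1/p)·C(3p-2, p-1) is an integer and is congruent to -2 modulo p. -/
/-! From `(3p - 1) · C(3p - 2, p - 1) = p · C(3p - 1, p)` and `p ∤ 3p - 1` we get `p ∣ C(3p - 2, p - 1)`;
writing `C(3p - 2, p - 1) = p m` and cancelling `p` gives `(3p - 1) m = C(3p - 1, p)`. By Lucas'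
theorem `C(3p - 1, p) ≡ (3p - 1) / p = 2 (mod p)`, and `3p - 1 ≡ -1`, so `m ≡ -2`. -/

namespace Nat

theorem add_one_mul_choose_pred {n p : ℕ} (hp : 0 < p) :
    (n + 1) * n.choose (p - 1) = p * (n + 1).choose p := by
  have h := add_one_mul_choose_eq n (p - 1)
  rwa [Nat.sub_add_cancel hp, mul_comm _ p] at h

theorem choose_prime_modEq_div {p : ℕ} (hp : p.Prime) (n : ℕ) : n.choose p ≡ n / p [MOD p] := by
  have := Fact.mk hp
  simpa [Nat.div_self hp.pos] using
    Choose.choose_modEq_choose_mod_mul_choose_div_nat (n := n) (k := p) (p := p)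

theorem Prime.dvd_choose_pred {p n : ℕ} (hp : p.Prime) (h : ¬p ∣ n + 1) :
    p ∣ n.choose (p - 1) :=
  ((hp.coprime_iff_not_dvd).mpr h).dvd_of_dvd_mul_left
    ⟨_, add_one_mul_choose_pred hp.pos⟩

theorem Prime.add_one_mul_choose_pred_div_modEq {p n : ℕ} (hp : p.Prime) (h : ¬p ∣ n + 1) :
    (n + 1) * (n.choose (p - 1) / p) ≡ (n + 1) / p [MOD p] := by
  have hmul : (n + 1) * (n.choose (p - 1) / p) = (n + 1).choose p := by
    rw [← Nat.mul_div_assoc _ (hp.dvd_choose_pred h), add_one_mul_choose_pred hp.pos,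
      Nat.mul_div_cancel_left _ hp.pos]
  rw [hmul]
  exact choose_prime_modEq_div hp (n + 1)

end Nat

theorem choose_div_p_mod (p : ℕ) (hp : p.Prime) :
    ∃ m : ℤ, (Nat.choose (3 * p - 2) (p - 1) : ℤ) = (p : ℤ) * m ∧
      Int.ModEq (p : ℤ) m (-2) := by
  have hp2 := hp.two_le
  have hsucc : 3 * p - 2 + 1 = p * 3 - 1 := by omega
  have hndvd : ¬p ∣ 3 * p - 2 + 1 := by
    rw [show 3 * p - 2 + 1 = p * 2 + (p - 1) by omega, Nat.dvd_add_right (dvd_mul_right p 2)]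
    exact Nat.not_dvd_of_pos_of_lt (by omega) (by omega)
  have hdiv : (p * 3 - 1) / p = 2 := Nat.div_eq_of_lt_le (by omega) (by omega)
  have hcong := hp.add_one_mul_choose_pred_div_modEq hndvd
  rw [hsucc, hdiv] at hcong
  obtain ⟨m, hm⟩ := hp.dvd_choose_pred hndvd
  rw [hm, Nat.mul_div_cancel_left _ hp.pos] at hcong
  refine ⟨m, by exact_mod_cast hm, ?_⟩
  rw [← ZMod.intCast_eq_intCast_iff]
  have hZ := (ZMod.natCast_eq_natCast_iff _ _ p).mpr hcong
  push_cast [Nat.cast_sub (by omega : 1 ≤ p * 3), ZMod.natCast_self] at hZ ⊢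
  linear_combination -hZ
end

section
/- For all integers n ≥ 1, 16^n · C(3n,n) / (24(3n-1)) = 16^{n-1} · (2·C(3n-2, n-1) − C(3n-2, n)); in particular 16^n·C(3n,n)/(24(3n-1)) is an integer. -/
theorem T_integrality (n : ℕ) (hn : 1 ≤ n) :
    (16 ^ n * Nat.choose (3 * n) n : ℚ) / (24 * (3 * (n : ℚ) - 1))
      = 16 ^ (n - 1) * (2 * Nat.choose (3 * n - 2) (n - 1) - (Nat.choose (3 * n - 2) n : ℚ)) ∧
    ∃ m : ℤ, (16 ^ n * Nat.choose (3 * n) n : ℚ) / (24 * (3 * (n : ℚ) - 1)) = (m : ℚ) := by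
  obtain ⟨k, rfl⟩ : ∃ k, n = k + 1 := ⟨n - 1, (Nat.succ_pred_eq_of_pos hn).symm⟩
  have e1 : 3 * (k + 1) = 3 * k + 3 := by ring
  have e2 : 3 * (k + 1) - 2 = 3 * k + 1 := by omega
  have e3 : k + 1 - 1 = k := by omega
  have hk1 : ((k : ℚ) + 1) ≠ 0 := by positivity
  -- key nat facts
  have n1 : Nat.choose (3 * k + 1) (k + 1) * (k + 1) = Nat.choose (3 * k + 1) k * (2 * k + 1) := by
    rw [Nat.choose_succ_right_eq]; congr 1; omega
  have n2 : (3 * k + 2) * Nat.choose (3 * k + 1) k = Nat.choose (3 * k + 2) (k + 1) * (k + 1) :=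
    Nat.add_one_mul_choose_eq (3 * k + 1) k
  have n3 : Nat.choose (3 * k + 2) (k + 1) * (3 * k + 3)
      = Nat.choose (3 * k + 3) (k + 1) * (2 * k + 2) := by
    have := Nat.choose_mul_succ_eq (3 * k + 2) (k + 1)
    have h' : 3 * k + 2 + 1 - (k + 1) = 2 * k + 2 := by omega
    rw [h'] at this
    convert this using 2 <;> omega
  -- cast to ℚ
  have q1 : (3 * (k : ℚ) + 2) * Nat.choose (3 * k + 1) k
      = (Nat.choose (3 * k + 2) (k + 1) : ℚ) * ((k : ℚ) + 1) := by exact_mod_cast congrArg (Nat.cast (R := ℚ)) n2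
  have q2 : (Nat.choose (3 * k + 2) (k + 1) : ℚ) * (3 * (k : ℚ) + 3)
      = (Nat.choose (3 * k + 3) (k + 1) : ℚ) * (2 * (k : ℚ) + 2) := by exact_mod_cast congrArg (Nat.cast (R := ℚ)) n3
  have q3 : (Nat.choose (3 * k + 1) (k + 1) : ℚ) * ((k : ℚ) + 1)
      = (Nat.choose (3 * k + 1) k : ℚ) * (2 * (k : ℚ) + 1) := by exact_mod_cast congrArg (Nat.cast (R := ℚ)) n1
  have hD : (24 : ℚ) * (3 * ((k : ℚ) + 1) - 1) ≠ 0 := by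
    have hk : (0 : ℚ) ≤ (k : ℚ) := Nat.cast_nonneg k
    intro h; nlinarith
  have main : (16 ^ (k + 1) * Nat.choose (3 * (k + 1)) (k + 1) : ℚ) / (24 * (3 * ((k + 1 : ℕ) : ℚ) - 1))
      = 16 ^ (k + 1 - 1) * (2 * Nat.choose (3 * (k + 1) - 2) (k + 1 - 1)
          - (Nat.choose (3 * (k + 1) - 2) (k + 1) : ℚ)) := by
    rw [e2, e3, e1]
    push_cast
    rw [div_eq_iff hD]
    apply mul_left_cancel₀ hk1
    linear_combination (-(16:ℚ) ^ k * 8) * q2 + (-(16:ℚ)^k * 24) * q1 + ((16:ℚ)^k * 24 * (3 * (k:ℚ) + 2)) * q3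
  refine ⟨main, ?_⟩
  refine ⟨16 ^ (k + 1 - 1) * (2 * Nat.choose (3 * (k + 1) - 2) (k + 1 - 1)
      - (Nat.choose (3 * (k + 1) - 2) (k + 1) : ℤ)), ?_⟩
  rw [main]
  push_cast
  ring
end

section
/- For any prime p, T_p ≡ -2 (mod p), where T_n = 16^n · C(3n,n) / (24(3n-1)). -/
theorem T_p_mod (p : ℕ) (hp : p.Prime) (m : ℤ)
    (hm : (m : ℚ) = (16 ^ p * Nat.choose (3 * p) p : ℚ) / (24 * (3 * (p : ℚ) - 1))) :
    Int.ModEq (p : ℤ) m (-2) := by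
  haveI := Fact.mk hp
  have hp2 : (2 : ℚ) ≤ (p : ℚ) := by exact_mod_cast hp.two_le
  have hne : (24 * (3 * (p : ℚ) - 1)) ≠ 0 := by nlinarith
  rw [eq_div_iff hne] at hm
  have keyZ : m * (24 * (3 * (p : ℤ) - 1)) = 16 ^ p * (Nat.choose (3 * p) p : ℤ) := by
    exact_mod_cast hm
  by_cases h2 : p = 2
  · subst h2
    norm_num [Nat.choose] at keyZ
    have : m = 32 := by omega
    subst this; decide
  by_cases h3 : p = 3
  · subst h3
    norm_num [Nat.choose] at keyZ
    have : m = 1792 := by omega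
    subst this; decide
  have h4 : p ≠ 4 := by rintro rfl; norm_num at hp
  have hp5 : 5 ≤ p := by have := hp.two_le; omega
  have hpos : 0 < p := hp.pos
  -- Lucas: choose (3p) p ≡ 3 [MOD p]
  have lucas := Choose.choose_modEq_choose_mod_mul_choose_div_nat (p := p) (n := 3 * p) (k := p)
  rw [Nat.mul_mod_left, Nat.mul_div_cancel 3 hpos, Nat.mod_self, Nat.div_self hpos] at lucas
  simp only [Nat.choose_self, Nat.choose_zero_right, one_mul] at lucas
  have hzm : ((Nat.choose (3 * p) p : ℕ) : ZMod p) = 3 := by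
    have := (ZMod.natCast_eq_natCast_iff _ _ _).mpr lucas
    simpa using this
  -- move keyZ to ZMod p
  have key2 : (m : ZMod p) * (24 * (3 * (p : ZMod p) - 1)) = 16 ^ p * 3 := by
    have := congrArg (fun x : ℤ => (x : ZMod p)) keyZ
    push_cast at this
    rw [hzm] at this
    exact this
  rw [ZMod.natCast_self] at key2
  have h16 : (16 : ZMod p) ^ p = 16 := ZMod.pow_card 16
  rw [h16] at key2
  have h24 : (24 : ZMod p) ≠ 0 := by
    intro h
    have hdvd : (p : ℕ) ∣ 24 := (ZMod.natCast_eq_zero_iff 24 p).mp (by exact_mod_cast h)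
    have hle := Nat.le_of_dvd (by norm_num) hdvd
    clear keyZ hm h hne hp2
    interval_cases p <;>
      first
        | exact absurd hp (by decide)
        | exact absurd hdvd (by decide)
  have hx : (24 : ZMod p) * ((m : ZMod p) + 2) = 0 := by ring_nf; ring_nf at key2; linear_combination -key2
  have := mul_eq_zero.mp hx
  rcases this with h | h
  · exact absurd h h24
  have hm2 : (m : ZMod p) = ((-2 : ℤ) : ZMod p) := by
    push_cast
    linear_combination h
  exact (ZMod.intCast_eq_intCast_iff _ _ _).mp hm2
end
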